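/- With C^{(r)} as in the bipartite-belt recurrence with initial value C^{(0)} = [[1,0,0],[-1,-1,1],[0,-1,1]], the row indexed -1 satisfies the antisymmetry C^{(r)}_{-1} = -C^{(-r+1)}_{-1} for all r ∈ Z. -/

import Mathlib

/-!
The rows of `C⁽ʳ⁾` evolve independently, and each step `S` is an involution up to conjugation
by negation, `S (-S (-M)) = M`: the columns fed into `[·]_-` are exactly the negated ones, so the
second application subtracts the correction that the first one added. As the step taken at `r`
and at `-r` is the same, `r ↦ -C⁽¹⁻ʳ⁾` satisfies the recurrence of `r ↦ C⁽ʳ⁾` row by row, and on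
row `-1` the two agree at `r = 0` because `C⁽¹⁾₋₁ = -C⁽⁰⁾₋₁`.
-/

/-- `[x]_- = max(0, -x)`. -/
def nPart (x : ℤ) : ℤ := max 0 (-x)

/-- The bipartite-belt step applied when `r` is even: columns `1` and `2`
change sign, and column `3` is updated. -/
def stepEven (C : Matrix (Fin 3) (Fin 3) ℤ) : Matrix (Fin 3) (Fin 3) ℤ :=
  Matrix.of fun i j =>
    if j = 2 then C i 2 - nPart (C i 0) - ![3, 1, 3] i * nPart (C i 1)
    else -C i j

/-- The bipartite-belt step applied when `r` is odd: column `3` changes sign,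
and columns `1` and `2` are updated. -/
def stepOdd (C : Matrix (Fin 3) (Fin 3) ℤ) : Matrix (Fin 3) (Fin 3) ℤ :=
  Matrix.of fun i j =>
    if j = 2 then -C i 2
    else if j = 0 then C i 0 - nPart (C i 2)
    else C i 1 - ![1, 3, 1] i * nPart (C i 2)

/-- The initial value `C⁽⁰⁾`; rows are indexed by `(-1,-2,-3)`, columns by `(1,2,3)`. -/
def C0 : Matrix (Fin 3) (Fin 3) ℤ := !![1, 0, 0; -1, -1, 1; 0, -1, 1]

def beltStep (r : ℤ) : Matrix (Fin 3) (Fin 3) ℤ → Matrix (Fin 3) (Fin 3) ℤ :=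
  if Even r then stepEven else stepOdd

theorem beltStep_neg (r : ℤ) : beltStep (-r) = beltStep r := by
  simp only [beltStep, even_neg]

theorem stepEven_neg_stepEven_neg (M : Matrix (Fin 3) (Fin 3) ℤ) :
    stepEven (-stepEven (-M)) = M := by
  ext i j
  fin_cases j <;> simp [stepEven]
  ring

theorem stepOdd_neg_stepOdd_neg (M : Matrix (Fin 3) (Fin 3) ℤ) :
    stepOdd (-stepOdd (-M)) = M := by
  ext i j
  fin_cases j <;> simp [stepOdd]

theorem beltStep_neg_beltStep_neg (r : ℤ) (M : Matrix (Fin 3) (Fin 3) ℤ) :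
    beltStep r (-beltStep r (-M)) = M := by
  unfold beltStep
  split_ifs
  exacts [stepEven_neg_stepEven_neg M, stepOdd_neg_stepOdd_neg M]

theorem beltStep_apply_row_congr (r : ℤ) {M N : Matrix (Fin 3) (Fin 3) ℤ} (i : Fin 3)
    (h : M i = N i) : beltStep r M i = beltStep r N i := by
  funext j
  unfold beltStep
  split_ifs <;> simp [stepEven, stepOdd, congrFun h]

theorem row_eq_neg_row_one_sub {ι β : Type*} [InvolutiveNeg β]
    (S : ℤ → (ι → β) → ι → β) (hS_neg : ∀ r, S (-r) = S r)
    (hS_inv : ∀ r M, S r (-S r (-M)) = M)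
    (hS_row : ∀ r {M N : ι → β} i, M i = N i → S r M i = S r N i)
    (C : ℤ → ι → β) (hC : ∀ r, C (r + 1) = S r (C r)) (i : ι) (h0 : C 0 i = -C 1 i) :
    ∀ r, C r i = -C (1 - r) i := by
  have step : ∀ r, C r i = -C (1 - r) i → C (r + 1) i = -C (1 - (r + 1)) i := by
    intro r hr
    have hC' : C (1 - r) = S r (C (-r)) := by rw [sub_eq_neg_add, hC, hS_neg]
    calc C (r + 1) i = S r (-S r (-(-C (-r)))) i := by
          rw [hC, neg_neg, ← hC']; exact hS_row r i hr
      _ = -C (1 - (r + 1)) i := by rw [hS_inv, show 1 - (r + 1) = -r by ring]; rfl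
  have nonneg : ∀ n : ℕ, C n i = -C (1 - n) i := by
    intro n
    induction n with
    | zero => simpa using h0
    | succ n ih => exact_mod_cast step n ih
  intro r
  obtain ⟨n, rfl | rfl⟩ := Int.eq_nat_or_neg r
  · exact nonneg n
  · have h := nonneg (n + 1)
    push_cast at h
    rw [show 1 - -(n : ℤ) = n + 1 by ring, h, show 1 - ((n : ℤ) + 1) = -n by ring, neg_neg]

/-- The row of `C⁽ʳ⁾` indexed by `-1` satisfies the antisymmetry
`C⁽ʳ⁾₋₁ = -C⁽⁻ʳ⁺¹⁾₋₁` for all `r ∈ ℤ`. -/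
theorem C_row_neg1_antisymmetry (C : ℤ → Matrix (Fin 3) (Fin 3) ℤ) (h0 : C 0 = C0)
    (hrec : ∀ r : ℤ, C (r + 1) = if Even r then stepEven (C r) else stepOdd (C r)) :
    ∀ r : ℤ, ∀ j : Fin 3, C r 0 j = -C (-r + 1) 0 j := by
  have hC : ∀ r, C (r + 1) = beltStep r (C r) := fun r => by
    rw [hrec, beltStep]; split_ifs <;> rfl
  have hC01 : C 0 0 = -C 1 0 := by
    rw [← zero_add 1, hC, h0]
    funext j
    fin_cases j <;> decide
  intro r j
  rw [neg_add_eq_sub]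
  exact congrFun (row_eq_neg_row_one_sub beltStep beltStep_neg beltStep_neg_beltStep_neg
    beltStep_apply_row_congr C hC 0 hC01 r) j
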